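/- Let H be a complex Hilbert space, q ∈ (0,1), and let a₀, a₁ : H →L[ℂ] H be bounded operators satisfying aᵢ ∘ aⱼ* − q • (aⱼ* ∘ aᵢ) = δ_{i,j} • 1 for i, j ∈ {0,1}. Let Ω ∈ H be a unit vector with a₀Ω = a₁Ω = 0. Let W : H →L[ℂ] H be a self-adjoint unitary such that Wφ = φ for every φ ∈ ker a₀, W maps the closed linear span of {(a₀*)^k Ω : k ∈ ℕ} into itself, and there is a sequence w : ℕ → ℝ such that for every φ ∈ ker a₀ the series ∑_{k=1}^∞ w_k (a₀*)^k φ converges in H to W(a₀* φ). Set X₀ = a₀ + a₀*, X₁ = a₁ + a₁*, Y = W ∘ X₀ ∘ W. Then ⟨Ω, (Y + X₁)⁴ Ω⟩ = 8 + 2q + 2 ∑_{k=1}^∞ w_k² q^k [k]_q!, where the series on the right converges. -/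

import Mathlib

open ContinuousLinearMap

noncomputable def qInt (q : ℝ) (n : ℕ) : ℝ := ∑ j ∈ Finset.range n, q ^ j

noncomputable def qFact (q : ℝ) (n : ℕ) : ℝ := ∏ j ∈ Finset.range n, qInt q (j + 1)

lemma qInt_succ' (q : ℝ) (n : ℕ) : qInt q (n+1) = 1 + q * qInt q n := by
  rw [qInt, Finset.sum_range_succ']
  simp [qInt, pow_succ, Finset.mul_sum]
  rw [add_comm]
  congr 1
  exact Finset.sum_congr rfl fun j _ => by ring

lemma qInt_nonneg {q : ℝ} (hq : 0 ≤ q) (n : ℕ) : 0 ≤ qInt q n :=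
  Finset.sum_nonneg fun j _ => pow_nonneg hq j

lemma qFact_nonneg {q : ℝ} (hq : 0 ≤ q) (n : ℕ) : 0 ≤ qFact q n :=
  Finset.prod_nonneg fun j _ => qInt_nonneg hq _

lemma qFact_succ (q : ℝ) (n : ℕ) : qFact q (n+1) = qFact q n * qInt q (n+1) :=
  Finset.prod_range_succ _ _

lemma qFact_zero (q : ℝ) : qFact q 0 = 1 := rfl

lemma qInt_one (q : ℝ) : qInt q 1 = 1 := by simp [qInt]

lemma qFact_one (q : ℝ) : qFact q 1 = 1 := by
  rw [qFact_succ, qFact_zero, qInt_one]; ring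

lemma pow_apply_succ {H : Type*} [NormedAddCommGroup H] [InnerProductSpace ℂ H]
    (T : H →L[ℂ] H) (n : ℕ) (x : H) : (T^(n+1)) x = T ((T^n) x) := by
  rw [pow_succ']; rfl

set_option maxHeartbeats 1000000 in
theorem fourth_moment_deformed_sum
    {H : Type*} [NormedAddCommGroup H] [InnerProductSpace ℂ H] [CompleteSpace H]
    (q : ℝ) (hq : q ∈ Set.Ioo (0 : ℝ) 1) (a₀ a₁ : H →L[ℂ] H)
    (h00 : a₀ ∘L adjoint a₀ - (q : ℂ) • (adjoint a₀ ∘L a₀) = 1)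
    (h01 : a₀ ∘L adjoint a₁ - (q : ℂ) • (adjoint a₁ ∘L a₀) = 0)
    (h10 : a₁ ∘L adjoint a₀ - (q : ℂ) • (adjoint a₀ ∘L a₁) = 0)
    (h11 : a₁ ∘L adjoint a₁ - (q : ℂ) • (adjoint a₁ ∘L a₁) = 1)
    (Ω : H) (hΩ : ‖Ω‖ = 1) (hvac₀ : a₀ Ω = 0) (hvac₁ : a₁ Ω = 0)
    (W : H →L[ℂ] H) (hWsa : adjoint W = W) (hWunit : W ∘L W = 1)
    (hWker : ∀ φ : H, a₀ φ = 0 → W φ = φ)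
    (hWinv : ∀ x ∈ (Submodule.span ℂ
        (Set.range fun k : ℕ => ((adjoint a₀) ^ k) Ω)).topologicalClosure,
      W x ∈ (Submodule.span ℂ
        (Set.range fun k : ℕ => ((adjoint a₀) ^ k) Ω)).topologicalClosure)
    (w : ℕ → ℝ)
    (hW1 : ∀ φ : H, a₀ φ = 0 →
      HasSum (fun k : ℕ => ((w (k + 1) : ℂ)) • (((adjoint a₀) ^ (k + 1)) φ))
        (W (adjoint a₀ φ))) :
    Summable (fun k : ℕ => w (k + 1) ^ 2 * q ^ (k + 1) * qFact q (k + 1)) ∧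
    (inner ℂ Ω (((W ∘L (a₀ + adjoint a₀) ∘L W + (a₁ + adjoint a₁)) ^ 4) Ω) : ℂ)
      = ((8 + 2 * q
          + 2 * ∑' k : ℕ, w (k + 1) ^ 2 * q ^ (k + 1) * qFact q (k + 1) : ℝ) : ℂ) := by
  obtain ⟨hq0, hq1⟩ := hq
  -- pointwise commutation relations
  have c00 : ∀ x : H, a₀ (adjoint a₀ x) = x + (q:ℂ) • adjoint a₀ (a₀ x) := by
    intro x
    have h := congrArg (fun (S : H →L[ℂ] H) => S x) h00
    simp only [sub_apply, comp_apply, smul_apply, one_apply] at h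
    rw [sub_eq_iff_eq_add] at h
    exact h
  have c01 : ∀ x : H, a₀ (adjoint a₁ x) = (q:ℂ) • adjoint a₁ (a₀ x) := by
    intro x
    have h := congrArg (fun (S : H →L[ℂ] H) => S x) h01
    simp only [sub_apply, comp_apply, smul_apply, zero_apply] at h
    exact sub_eq_zero.mp h
  have c10 : ∀ x : H, a₁ (adjoint a₀ x) = (q:ℂ) • adjoint a₀ (a₁ x) := by
    intro x
    have h := congrArg (fun (S : H →L[ℂ] H) => S x) h10
    simp only [sub_apply, comp_apply, smul_apply, zero_apply] at h
    exact sub_eq_zero.mp h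
  have c11 : ∀ x : H, a₁ (adjoint a₁ x) = x + (q:ℂ) • adjoint a₁ (a₁ x) := by
    intro x
    have h := congrArg (fun (S : H →L[ℂ] H) => S x) h11
    simp only [sub_apply, comp_apply, smul_apply, one_apply] at h
    rw [sub_eq_iff_eq_add] at h
    exact h
  -- basic vacuum facts
  have hBΩker : a₀ (adjoint a₁ Ω) = 0 := by rw [c01, hvac₀, map_zero, smul_zero]
  have ha₀AΩ : a₀ (adjoint a₀ Ω) = Ω := by rw [c00, hvac₀, map_zero, smul_zero, add_zero]
  have ha₁BΩ : a₁ (adjoint a₁ Ω) = Ω := by rw [c11, hvac₁, map_zero, smul_zero, add_zero]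
  have ha₀ABΩ : a₀ (adjoint a₀ (adjoint a₁ Ω)) = adjoint a₁ Ω := by
    rw [c00, hBΩker, map_zero, smul_zero, add_zero]
  -- a₁ on powers of adjoint a₀
  have R3 : ∀ (n : ℕ) (x : H),
      a₁ (((adjoint a₀)^n) x) = ((q^n : ℝ) : ℂ) • ((adjoint a₀)^n) (a₁ x) := by
    intro n
    induction n with
    | zero => intro x; simp
    | succ n ih =>
      intro x
      rw [pow_apply_succ, c10, ih, map_smul, smul_smul,
        pow_apply_succ (adjoint a₀) n (a₁ x)]
      congr 1
      push_cast
      ring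
  have hA1 : ∀ k : ℕ, a₁ (((adjoint a₀)^k) Ω) = 0 := by
    intro k; rw [R3, hvac₁, map_zero, smul_zero]
  -- a₁ vanishes on the closed span M
  have hMker : ∀ x ∈ (Submodule.span ℂ
      (Set.range fun k : ℕ => ((adjoint a₀) ^ k) Ω)).topologicalClosure, a₁ x = 0 := by
    intro x hx
    have hle : Submodule.span ℂ (Set.range fun k : ℕ => ((adjoint a₀) ^ k) Ω)
        ≤ LinearMap.ker (a₁ : H →ₗ[ℂ] H) := by
      rw [Submodule.span_le]
      rintro _ ⟨k, rfl⟩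
      exact hA1 k
    exact Submodule.topologicalClosure_minimal _ hle (ContinuousLinearMap.isClosed_ker a₁) hx
  have hmemM : ∀ k : ℕ, ((adjoint a₀)^k) Ω ∈ (Submodule.span ℂ
      (Set.range fun k : ℕ => ((adjoint a₀) ^ k) Ω)).topologicalClosure := by
    intro k
    exact Submodule.le_topologicalClosure _ (Submodule.subset_span ⟨k, rfl⟩)
  -- W inner ℂ product identities
  have hWr : ∀ x y : H, (inner ℂ x (W y) : ℂ) = inner ℂ (W x) y := by
    intro x y
    conv_lhs => rw [← hWsa]
    rw [adjoint_inner_right]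
  have hWl : ∀ x y : H, (inner ℂ (W x) y : ℂ) = inner ℂ x (W y) := fun x y => (hWr x y).symm
  have hWW : ∀ x : H, W (W x) = x := by
    intro x
    have h := congrArg (fun (S : H →L[ℂ] H) => S x) hWunit
    simpa using h
  have hWinner : ∀ x y : H, (inner ℂ (W x) (W y) : ℂ) = inner ℂ x y := by
    intro x y
    rw [hWl, hWW]
  have hWΩ : W Ω = Ω := hWker Ω hvac₀
  have hWBΩ : W (adjoint a₁ Ω) = adjoint a₁ Ω := hWker _ hBΩker
  -- a₀ on powers of adjoint a₀ applied to kernel vectors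
  have R1 : ∀ (x : H), a₀ x = 0 → ∀ n : ℕ,
      a₀ (((adjoint a₀)^(n+1)) x) = ((qInt q (n+1) : ℝ) : ℂ) • ((adjoint a₀)^n) x := by
    intro x hx n
    induction n with
    | zero =>
      rw [pow_apply_succ, pow_zero, ContinuousLinearMap.one_apply, c00, hx, map_zero, smul_zero, add_zero,
        qInt_one]
      simp
    | succ n ih =>
      rw [pow_apply_succ, c00, ih, map_smul, smul_smul, ← pow_apply_succ,
        qInt_succ' q (n+1)]
      push_cast
      module
  -- orthogonality of (adjoint a₀)^k Ω
  have orth : ∀ k m : ℕ, (inner ℂ (((adjoint a₀)^k) Ω) (((adjoint a₀)^m) Ω) : ℂ)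
      = if k = m then ((qFact q k : ℝ) : ℂ) else 0 := by
    intro k
    induction k with
    | zero =>
      intro m
      cases m with
      | zero =>
        rw [if_pos rfl, qFact_zero, pow_zero, ContinuousLinearMap.one_apply]
        rw [inner_self_eq_norm_sq_to_K, hΩ]
        norm_num
      | succ s =>
        have hne : (0 : ℕ) ≠ s + 1 := by omega
        rw [if_neg hne, pow_zero, ContinuousLinearMap.one_apply, pow_apply_succ, adjoint_inner_right, hvac₀,
          inner_zero_left]
    | succ k ih =>
      intro m
      cases m with
      | zero =>
        have hne : k + 1 ≠ 0 := by omega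
        rw [if_neg hne, pow_apply_succ, adjoint_inner_left, pow_zero, ContinuousLinearMap.one_apply, hvac₀,
          inner_zero_right]
      | succ s =>
        rw [pow_apply_succ, adjoint_inner_left, R1 Ω hvac₀ s, inner_smul_right, ih s]
        by_cases h : k = s
        · subst h
          rw [if_pos rfl, if_pos rfl, qFact_succ]
          push_cast
          ring
        · have h' : ¬ (k + 1 = s + 1) := by omega
          rw [if_neg h, if_neg h', mul_zero]
  -- the series vector t = W (adjoint a₀ Ω)
  have hSt : HasSum (fun k : ℕ => ((w (k+1) : ℂ)) • (((adjoint a₀)^(k+1)) Ω))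
      (W (adjoint a₀ Ω)) := hW1 Ω hvac₀
  have innAt : ∀ k : ℕ, (inner ℂ (((adjoint a₀)^(k+1)) Ω) (W (adjoint a₀ Ω)) : ℂ)
      = ((w (k+1) * qFact q (k+1) : ℝ) : ℂ) := by
    intro k
    have h1 := (innerSL ℂ (((adjoint a₀)^(k+1)) Ω)).hasSum hSt
    have h2 : (fun m : ℕ => (innerSL ℂ (((adjoint a₀)^(k+1)) Ω))
          ((w (m+1) : ℂ) • (((adjoint a₀)^(m+1)) Ω)))
        = fun m : ℕ => if m = k then ((w (k+1) * qFact q (k+1) : ℝ) : ℂ) else 0 := by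
      funext m
      rw [innerSL_apply_apply, inner_smul_right, orth]
      by_cases h : m = k
      · subst h
        rw [if_pos rfl, if_pos rfl]
        push_cast
        ring
      · have h' : ¬ (k + 1 = m + 1) := by omega
        rw [if_neg h, if_neg h', mul_zero]
    rw [h2] at h1
    have h3 := hasSum_ite_eq k ((w (k+1) * qFact q (k+1) : ℝ) : ℂ)
    have h4 := h1.unique h3
    rw [innerSL_apply_apply] at h4
    exact h4
  have innAt' : ∀ k : ℕ, (inner ℂ (W (adjoint a₀ Ω)) (((adjoint a₀)^(k+1)) Ω) : ℂ)
      = ((w (k+1) * qFact q (k+1) : ℝ) : ℂ) := by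
    intro k
    rw [← inner_conj_symm, innAt]
    exact Complex.conj_ofReal _
  -- ⟨t,t⟩ = 1
  have htt : (inner ℂ (W (adjoint a₀ Ω)) (W (adjoint a₀ Ω)) : ℂ) = 1 := by
    rw [hWinner]
    have h : (adjoint a₀) Ω = ((adjoint a₀)^1) Ω := by simp
    rw [h, orth]
    rw [if_pos rfl, qFact_one]
    norm_num
  have hsum1C : HasSum (fun k : ℕ => ((w (k+1)^2 * qFact q (k+1) : ℝ) : ℂ)) 1 := by
    have h1 := (innerSL ℂ (W (adjoint a₀ Ω))).hasSum hSt
    have h2 : (fun m : ℕ => (innerSL ℂ (W (adjoint a₀ Ω)))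
          ((w (m+1) : ℂ) • (((adjoint a₀)^(m+1)) Ω)))
        = fun m : ℕ => ((w (m+1)^2 * qFact q (m+1) : ℝ) : ℂ) := by
      funext m
      rw [innerSL_apply_apply, inner_smul_right, innAt' m]
      push_cast
      ring
    rw [h2] at h1
    rw [innerSL_apply_apply, htt] at h1
    exact h1
  have hsum1 : HasSum (fun k : ℕ => w (k+1)^2 * qFact q (k+1)) 1 := by
    have h := Complex.reCLM.hasSum hsum1C
    simp only [Complex.reCLM_apply, Complex.ofReal_re] at h
    exact h
  -- summability of the target series
  have hSummable : Summable (fun k : ℕ => w (k + 1) ^ 2 * q ^ (k + 1) * qFact q (k + 1)) := by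
    apply Summable.of_nonneg_of_le
    · intro k
      have hf := qFact_nonneg hq0.le (k+1)
      positivity
    · intro k
      have h1 : q ^ (k+1) ≤ 1 := pow_le_one₀ hq0.le hq1.le
      have h2 : (0:ℝ) ≤ w (k+1)^2 * qFact q (k+1) := by
        have hf := qFact_nonneg hq0.le (k+1); positivity
      calc w (k + 1) ^ 2 * q ^ (k + 1) * qFact q (k + 1)
          = (w (k+1)^2 * qFact q (k+1)) * q^(k+1) := by ring
        _ ≤ (w (k+1)^2 * qFact q (k+1)) * 1 := mul_le_mul_of_nonneg_left h1 h2
        _ = w (k+1)^2 * qFact q (k+1) := by ring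
    · exact hsum1.summable
  refine ⟨hSummable, ?_⟩
  set r : ℝ := ∑' k : ℕ, w (k + 1) ^ 2 * q ^ (k + 1) * qFact q (k + 1) with hrdef
  have hrsum : HasSum (fun k : ℕ => w (k + 1) ^ 2 * q ^ (k + 1) * qFact q (k + 1)) r :=
    hSummable.hasSum
  -- series for a₁ (W (adjoint a₀ (adjoint a₁ Ω)))
  have hSb : HasSum (fun k : ℕ => ((w (k+1) : ℂ)) • (((adjoint a₀)^(k+1)) (adjoint a₁ Ω)))
      (W (adjoint a₀ (adjoint a₁ Ω))) := hW1 _ hBΩker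
  have hSs : HasSum (fun k : ℕ => ((w (k+1) * q^(k+1) : ℝ) : ℂ) • (((adjoint a₀)^(k+1)) Ω))
      (a₁ (W (adjoint a₀ (adjoint a₁ Ω)))) := by
    have h1 := a₁.hasSum hSb
    have h2 : (fun k : ℕ => a₁ ((w (k+1) : ℂ) • (((adjoint a₀)^(k+1)) (adjoint a₁ Ω))))
        = fun k : ℕ => ((w (k+1) * q^(k+1) : ℝ) : ℂ) • (((adjoint a₀)^(k+1)) Ω) := by
      funext k
      rw [map_smul, R3, ha₁BΩ, smul_smul]
      congr 1
      push_cast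
      ring
    rw [h2] at h1
    exact h1
  -- cross inner ℂ product ⟨t, s⟩ = r
  have hts : (inner ℂ (W (adjoint a₀ Ω)) (a₁ (W (adjoint a₀ (adjoint a₁ Ω)))) : ℂ)
      = ((r : ℝ) : ℂ) := by
    have h1 := (innerSL ℂ (W (adjoint a₀ Ω))).hasSum hSs
    have h2 : (fun k : ℕ => (innerSL ℂ (W (adjoint a₀ Ω)))
          (((w (k+1) * q^(k+1) : ℝ) : ℂ) • (((adjoint a₀)^(k+1)) Ω)))
        = fun k : ℕ => ((w (k + 1) ^ 2 * q ^ (k + 1) * qFact q (k + 1) : ℝ) : ℂ) := by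
      funext k
      rw [innerSL_apply_apply, inner_smul_right, innAt' k]
      push_cast
      ring
    rw [h2] at h1
    have h3 : HasSum (fun k : ℕ => ((w (k + 1) ^ 2 * q ^ (k + 1) * qFact q (k + 1) : ℝ) : ℂ))
        ((r : ℝ) : ℂ) := Complex.ofRealCLM.hasSum hrsum
    have h4 := h1.unique h3
    rw [innerSL_apply_apply] at h4
    exact h4
  have hst : (inner ℂ (a₁ (W (adjoint a₀ (adjoint a₁ Ω)))) (W (adjoint a₀ Ω)) : ℂ)
      = ((r : ℝ) : ℂ) := by
    rw [← inner_conj_symm, hts]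
    exact Complex.conj_ofReal _
  -- ⟨BΩ, s⟩ = 0
  have hBs : (inner ℂ (adjoint a₁ Ω) (a₁ (W (adjoint a₀ (adjoint a₁ Ω)))) : ℂ) = 0 := by
    have h1 := (innerSL ℂ (adjoint a₁ Ω)).hasSum hSs
    have h2 : (fun k : ℕ => (innerSL ℂ (adjoint a₁ Ω))
          (((w (k+1) * q^(k+1) : ℝ) : ℂ) • (((adjoint a₀)^(k+1)) Ω)))
        = fun k : ℕ => (0 : ℂ) := by
      funext k
      rw [innerSL_apply_apply, inner_smul_right, pow_apply_succ, adjoint_inner_right, hBΩker,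
        inner_zero_left, mul_zero]
    rw [h2] at h1
    have h4 := h1.unique hasSum_zero
    rw [innerSL_apply_apply] at h4
    exact h4
  have hsB : (inner ℂ (a₁ (W (adjoint a₀ (adjoint a₁ Ω)))) (adjoint a₁ Ω) : ℂ) = 0 := by
    rw [← inner_conj_symm, hBs, map_zero]
  -- a₁ kills t and W(A²Ω)
  have ha₁t : a₁ (W (adjoint a₀ Ω)) = 0 := by
    apply hMker
    apply hWinv
    have h : (adjoint a₀) Ω = ((adjoint a₀)^1) Ω := by simp
    rw [h]
    exact hmemM 1
  have ha₁u₂ : a₁ (W (adjoint a₀ (adjoint a₀ Ω))) = 0 := by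
    apply hMker
    apply hWinv
    have h : (adjoint a₀) ((adjoint a₀) Ω) = ((adjoint a₀)^2) Ω := by
      rw [pow_apply_succ, pow_one]
    rw [h]
    exact hmemM 2
  -- abbreviations
  set T : H →L[ℂ] H := W ∘L (a₀ + adjoint a₀) ∘L W + (a₁ + adjoint a₁) with hT
  set t : H := W (adjoint a₀ Ω) with htdef
  set u₂ : H := W (adjoint a₀ (adjoint a₀ Ω)) with hu₂
  set u₃ : H := W (adjoint a₀ (adjoint a₁ Ω)) with hu₃
  set u₄ : H := adjoint a₁ t with hu₄
  set u₅ : H := adjoint a₁ (adjoint a₁ Ω) with hu₅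
  have hTapp : ∀ x : H, T x = W (a₀ (W x) + adjoint a₀ (W x)) + (a₁ x + adjoint a₁ x) := by
    intro x
    rw [hT]
    simp [ContinuousLinearMap.add_apply, comp_apply]
  -- T is self-adjoint
  have hTsa : adjoint T = T := by
    rw [hT]
    have hWst : star W = W := by rw [star_eq_adjoint, hWsa]
    have hXst : star (a₀ + adjoint a₀) = a₀ + adjoint a₀ := by
      rw [star_add, star_eq_adjoint, star_eq_adjoint, adjoint_adjoint, add_comm]
    have h1 : W ∘L (a₀ + adjoint a₀) ∘L W + (a₁ + adjoint a₁)
        = W * ((a₀ + adjoint a₀) * W) + (a₁ + adjoint a₁) := rfl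
    rw [h1, ← star_eq_adjoint, star_add, star_mul, star_mul, hWst, hXst]
    rw [star_add, star_eq_adjoint, star_eq_adjoint, adjoint_adjoint, add_comm (adjoint a₁) a₁]
    rw [mul_assoc]
  -- compute T on the relevant vectors
  have hTΩ : T Ω = t + adjoint a₁ Ω := by
    rw [hTapp, hWΩ, hvac₀, hvac₁]
    rw [htdef]
    simp
  have hWt : W t = adjoint a₀ Ω := by rw [htdef, hWW]
  have hTt : T t = Ω + u₂ + u₄ := by
    rw [hTapp, hWt, ha₀AΩ, map_add, hWΩ, ha₁t, zero_add, ← hu₂, ← hu₄]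
  have hTB : T (adjoint a₁ Ω) = u₃ + (Ω + u₅) := by
    rw [hTapp, hWBΩ, hBΩker, ha₁BΩ, zero_add, ← hu₃, ← hu₅]
  -- pairwise inner ℂ products
  have conj0 : ∀ x y : H, (inner ℂ x y : ℂ) = 0 → (inner ℂ y x : ℂ) = 0 := by
    intro x y h
    rw [← inner_conj_symm, h, map_zero]
  have d11 : (inner ℂ Ω Ω : ℂ) = 1 := by
    rw [inner_self_eq_norm_sq_to_K, hΩ]; norm_num
  have hBB : (inner ℂ (adjoint a₁ Ω) (adjoint a₁ Ω) : ℂ) = 1 := by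
    rw [adjoint_inner_left, ha₁BΩ]; exact d11
  have z12 : (inner ℂ Ω u₂ : ℂ) = 0 := by
    rw [hu₂, hWr, hWΩ, adjoint_inner_right, hvac₀, inner_zero_left]
  have z13 : (inner ℂ Ω u₃ : ℂ) = 0 := by
    rw [hu₃, hWr, hWΩ, adjoint_inner_right, hvac₀, inner_zero_left]
  have z14 : (inner ℂ Ω u₄ : ℂ) = 0 := by
    rw [hu₄, adjoint_inner_right, hvac₁, inner_zero_left]
  have z15 : (inner ℂ Ω u₅ : ℂ) = 0 := by
    rw [hu₅, adjoint_inner_right, hvac₁, inner_zero_left]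
  have z23 : (inner ℂ u₂ u₃ : ℂ) = 0 := by
    rw [hu₂, hu₃, hWinner, adjoint_inner_left, ha₀ABΩ, adjoint_inner_left, hBΩker,
      inner_zero_right]
  have z24 : (inner ℂ u₂ u₄ : ℂ) = 0 := by
    rw [hu₄, adjoint_inner_right, ha₁u₂, inner_zero_left]
  have z25 : (inner ℂ u₂ u₅ : ℂ) = 0 := by
    rw [hu₅, adjoint_inner_right, ha₁u₂, inner_zero_left]
  have z35 : (inner ℂ u₃ u₅ : ℂ) = 0 := by
    rw [hu₅, adjoint_inner_right]
    exact hsB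
  have htB : (inner ℂ t (adjoint a₁ Ω) : ℂ) = 0 := by
    rw [htdef, hWl, hWBΩ, adjoint_inner_left, hBΩker, inner_zero_right]
  have z45 : (inner ℂ u₄ u₅ : ℂ) = 0 := by
    rw [hu₄, hu₅, adjoint_inner_right, c11, ha₁t, map_zero, smul_zero, add_zero]
    exact htB
  have z21 := conj0 _ _ z12
  have z31 := conj0 _ _ z13
  have z41 := conj0 _ _ z14
  have z51 := conj0 _ _ z15
  have z32 := conj0 _ _ z23
  have z42 := conj0 _ _ z24
  have z52 := conj0 _ _ z25
  have z53 := conj0 _ _ z35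
  have z54 := conj0 _ _ z45
  have hq2 : qFact q 2 = 1 + q := by
    rw [qFact_succ, qFact_one, one_mul, qInt_succ', qInt_one, mul_one]
  have d22 : (inner ℂ u₂ u₂ : ℂ) = ((1 + q : ℝ) : ℂ) := by
    rw [hu₂, hWinner]
    have h : adjoint a₀ (adjoint a₀ Ω) = ((adjoint a₀)^2) Ω := by
      rw [pow_apply_succ, pow_one]
    rw [h, orth, if_pos rfl, hq2]
  have d33 : (inner ℂ u₃ u₃ : ℂ) = 1 := by
    rw [hu₃, hWinner, adjoint_inner_left, ha₀ABΩ]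
    exact hBB
  have d44 : (inner ℂ u₄ u₄ : ℂ) = 1 := by
    rw [hu₄, adjoint_inner_right, c11, ha₁t, map_zero, smul_zero, add_zero]
    exact htt
  have d55 : (inner ℂ u₅ u₅ : ℂ) = ((1 + q : ℝ) : ℂ) := by
    rw [hu₅, adjoint_inner_right, c11, ha₁BΩ, inner_add_left, inner_smul_left, hBB]
    rw [Complex.conj_ofReal]
    push_cast
    ring
  have c43 : (inner ℂ u₄ u₃ : ℂ) = ((r : ℝ) : ℂ) := by
    rw [hu₄, adjoint_inner_left]
    exact hts
  have c34 : (inner ℂ u₃ u₄ : ℂ) = ((r : ℝ) : ℂ) := by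
    rw [hu₄, adjoint_inner_right]
    exact hst
  -- putting it together
  have hT2sa : adjoint (T ∘L T) = T ∘L T := by rw [adjoint_comp, hTsa]
  have e4 : (T^4) Ω = (T ∘L T) ((T ∘L T) Ω) := by
    have h : T^4 = (T * T) * (T * T) := by
      rw [pow_succ, pow_succ, pow_two, mul_assoc (T * T) T T]
    rw [h]; rfl
  have key : (inner ℂ Ω ((T^4) Ω) : ℂ) = inner ℂ ((T ∘L T) Ω) ((T ∘L T) Ω) := by
    rw [e4]
    calc (inner ℂ Ω ((T ∘L T) ((T ∘L T) Ω)) : ℂ)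
        = inner ℂ (adjoint (T ∘L T) Ω) ((T ∘L T) Ω) := (adjoint_inner_left _ _ _).symm
      _ = inner ℂ ((T ∘L T) Ω) ((T ∘L T) Ω) := by rw [hT2sa]
  have hTTΩ : (T ∘L T) Ω = (Ω + u₂ + u₄) + (u₃ + (Ω + u₅)) := by
    rw [comp_apply, hTΩ, map_add, hTt, hTB]
  rw [key, hTTΩ]
  simp only [inner_add_left, inner_add_right, d11, d22, d33, d44, d55, z12, z13, z14, z15,
    z21, z31, z41, z51, z23, z24, z25, z32, z42, z52, z35, z53, z45, z54, c34, c43]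
  push_cast
  ring
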